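/- arXiv:2210.08203 — 5 statements merged into one kernel-verified Lean document; each statement's English description precedes it below -/
import Mathlib

section
/- Tian–Pearl bounds on the probability of necessity and sufficiency: in the potential-outcome model, the complier probability p = P(Y1=1, Y0=0) satisfies max{0, P(Y1=1)−P(Y0=1), P(Y=1)−P(Y0=1), P(Y1=1)−P(Y=1)} ≤ p ≤ min{P(Y1=1), P(Y0=0), P(X=1,Y=1)+P(X=0,Y=0), P(Y1=1)−P(Y0=1)+P(X=0,Y=1)+P(X=1,Y=0)}. -/
open MeasureTheory

/-- The probability of an event, as a real number. -/
noncomputable def pr {Ω : Type*} [MeasurableSpace Ω] (P : Measure Ω) (s : Set Ω) : ℝ :=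
  (P s).toReal

lemma pr_split {Ω : Type*} [MeasurableSpace Ω] (P : Measure Ω) [IsFiniteMeasure P]
    (s : Set Ω) (f : Ω → Bool) (hf : Measurable f) :
    pr P s = pr P (s ∩ {ω | f ω = true}) + pr P (s ∩ {ω | f ω = false}) := by
  have ht : MeasurableSet {ω | f ω = true} := hf (measurableSet_singleton true)
  have hdiff : s \ {ω | f ω = true} = s ∩ {ω | f ω = false} := by
    ext ω; simp [Set.mem_diff]
  have h := measure_inter_add_diff (μ := P) s ht
  rw [hdiff] at h
  unfold pr
  rw [← h, ENNReal.toReal_add (measure_ne_top P _) (measure_ne_top P _)]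

theorem tian_pearl_pns_bounds {Ω : Type*} [MeasurableSpace Ω] (P : Measure Ω) [IsProbabilityMeasure P]
    (X Y0 Y1 : Ω → Bool) (hX : Measurable X) (hY0 : Measurable Y0) (hY1 : Measurable Y1)
    (Y : Ω → Bool) (hY : ∀ ω, Y ω = if X ω = true then Y1 ω else Y0 ω) :
    max (max 0 ((pr P {ω | Y1 ω = true}) - (pr P {ω | Y0 ω = true}))) (max ((pr P {ω | Y ω = true}) - (pr P {ω | Y0 ω = true})) ((pr P {ω | Y1 ω = true}) - (pr P {ω | Y ω = true}))) ≤ pr P {ω | Y1 ω = true ∧ Y0 ω = false} ∧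
    pr P {ω | Y1 ω = true ∧ Y0 ω = false} ≤ min (min (pr P {ω | Y1 ω = true}) (pr P {ω | Y0 ω = false})) (min ((pr P {ω | X ω = true ∧ Y ω = true}) + (pr P {ω | X ω = false ∧ Y ω = false})) ((pr P {ω | Y1 ω = true}) - (pr P {ω | Y0 ω = true}) + (pr P {ω | X ω = false ∧ Y ω = true}) + (pr P {ω | X ω = true ∧ Y ω = false}))) := by
  set A : Bool → Bool → Bool → ℝ :=
    fun a b c => pr P {ω | X ω = a ∧ Y0 ω = b ∧ Y1 ω = c} with hA
  have key : ∀ s : Set Ω, pr P s =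
      pr P (s ∩ {ω | X ω = true ∧ Y0 ω = true ∧ Y1 ω = true})
      + pr P (s ∩ {ω | X ω = true ∧ Y0 ω = true ∧ Y1 ω = false})
      + pr P (s ∩ {ω | X ω = true ∧ Y0 ω = false ∧ Y1 ω = true})
      + pr P (s ∩ {ω | X ω = true ∧ Y0 ω = false ∧ Y1 ω = false})
      + pr P (s ∩ {ω | X ω = false ∧ Y0 ω = true ∧ Y1 ω = true})
      + pr P (s ∩ {ω | X ω = false ∧ Y0 ω = true ∧ Y1 ω = false})
      + pr P (s ∩ {ω | X ω = false ∧ Y0 ω = false ∧ Y1 ω = true})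
      + pr P (s ∩ {ω | X ω = false ∧ Y0 ω = false ∧ Y1 ω = false}) := by
    intro s
    rw [pr_split P s X hX,
      pr_split P (s ∩ {ω | X ω = true}) Y0 hY0,
      pr_split P (s ∩ {ω | X ω = false}) Y0 hY0,
      pr_split P (s ∩ {ω | X ω = true} ∩ {ω | Y0 ω = true}) Y1 hY1,
      pr_split P (s ∩ {ω | X ω = true} ∩ {ω | Y0 ω = false}) Y1 hY1,
      pr_split P (s ∩ {ω | X ω = false} ∩ {ω | Y0 ω = true}) Y1 hY1,
      pr_split P (s ∩ {ω | X ω = false} ∩ {ω | Y0 ω = false}) Y1 hY1]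
    simp only [Set.inter_assoc, ← Set.setOf_and, and_assoc]
    ring
  have hcell : ∀ (g : Bool → Bool → Bool → Bool) (a b c : Bool),
      {ω | g (X ω) (Y0 ω) (Y1 ω) = true} ∩ {ω | X ω = a ∧ Y0 ω = b ∧ Y1 ω = c}
      = if g a b c = true then {ω | X ω = a ∧ Y0 ω = b ∧ Y1 ω = c} else (∅ : Set Ω) := by
    intro g a b c
    split_ifs with h
    · ext ω
      simp only [Set.mem_inter_iff, Set.mem_setOf_eq]
      constructor
      · rintro ⟨_, hrest⟩; exact hrest
      · rintro ⟨ha, hb, hc⟩; exact ⟨by rw [ha, hb, hc]; exact h, ha, hb, hc⟩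
    · ext ω
      simp only [Set.mem_inter_iff, Set.mem_setOf_eq, Set.mem_empty_iff_false, iff_false]
      rintro ⟨hg, ha, hb, hc⟩
      rw [ha, hb, hc] at hg
      exact h hg
  have heval : ∀ (g : Bool → Bool → Bool → Bool),
      pr P {ω | g (X ω) (Y0 ω) (Y1 ω) = true} =
      (if g true true true = true then A true true true else 0)
      + (if g true true false = true then A true true false else 0)
      + (if g true false true = true then A true false true else 0)
      + (if g true false false = true then A true false false else 0)
      + (if g false true true = true then A false true true else 0)
      + (if g false true false = true then A false true false else 0)
      + (if g false false true = true then A false false true else 0)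
      + (if g false false false = true then A false false false else 0) := by
    intro g
    rw [key {ω | g (X ω) (Y0 ω) (Y1 ω) = true}]
    rw [hcell g true true true, hcell g true true false, hcell g true false true,
      hcell g true false false, hcell g false true true, hcell g false true false,
      hcell g false false true, hcell g false false false]
    congr 1 <;> [skip; split_ifs <;> simp [pr, hA]]
    congr 1 <;> [skip; split_ifs <;> simp [pr, hA]]
    congr 1 <;> [skip; split_ifs <;> simp [pr, hA]]
    congr 1 <;> [skip; split_ifs <;> simp [pr, hA]]
    congr 1 <;> [skip; split_ifs <;> simp [pr, hA]]
    congr 1 <;> [skip; split_ifs <;> simp [pr, hA]]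
    congr 1 <;> split_ifs <;> simp [pr, hA]
  -- rewrite each relevant set as a boolean function of (X, Y0, Y1)
  have hYb : ∀ ω, Y ω = cond (X ω) (Y1 ω) (Y0 ω) := by
    intro ω; rw [hY]; cases X ω <;> simp
  have e1 : pr P {ω | Y1 ω = true} =
      A true true true + A true false true + A false true true + A false false true := by
    have := heval (fun _ _ c => c); simpa using this
  have e0 : pr P {ω | Y0 ω = true} =
      A true true true + A true true false + A false true true + A false true false := by
    have := heval (fun _ b _ => b); simpa using this
  have e0f : pr P {ω | Y0 ω = false} =
      A true false true + A true false false + A false false true + A false false false := by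
    have h : {ω | Y0 ω = false} = {ω | (!(Y0 ω)) = true} := by ext ω; simp
    rw [h]
    have := heval (fun _ b _ => !b); simpa using this
  have eY : pr P {ω | Y ω = true} =
      A true true true + A true false true + A false true true + A false true false := by
    have h : {ω | Y ω = true} = {ω | (cond (X ω) (Y1 ω) (Y0 ω)) = true} := by
      ext ω; rw [Set.mem_setOf_eq, Set.mem_setOf_eq, hYb]
    rw [h]
    have := heval (fun a b c => cond a c b); simpa using this
  have ep : pr P {ω | Y1 ω = true ∧ Y0 ω = false} =
      A true false true + A false false true := by
    have h : {ω | Y1 ω = true ∧ Y0 ω = false} = {ω | (Y1 ω && !(Y0 ω)) = true} := by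
      ext ω; simp
    rw [h]
    have := heval (fun _ b c => c && !b); simpa using this
  have eXY : pr P {ω | X ω = true ∧ Y ω = true} = A true true true + A true false true := by
    have h : {ω | X ω = true ∧ Y ω = true} = {ω | (X ω && cond (X ω) (Y1 ω) (Y0 ω)) = true} := by
      ext ω; rw [Set.mem_setOf_eq, Set.mem_setOf_eq, hYb]; simp
    rw [h]
    have := heval (fun a b c => a && cond a c b); simpa using this
  have eXY2 : pr P {ω | X ω = false ∧ Y ω = false} =
      A false false true + A false false false := by
    have h : {ω | X ω = false ∧ Y ω = false} =
        {ω | (!(X ω) && !(cond (X ω) (Y1 ω) (Y0 ω))) = true} := by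
      ext ω; rw [Set.mem_setOf_eq, Set.mem_setOf_eq, hYb]; simp
    rw [h]
    have := heval (fun a b c => !a && !(cond a c b)); simpa using this
  have eXY3 : pr P {ω | X ω = false ∧ Y ω = true} = A false true true + A false true false := by
    have h : {ω | X ω = false ∧ Y ω = true} =
        {ω | (!(X ω) && cond (X ω) (Y1 ω) (Y0 ω)) = true} := by
      ext ω; rw [Set.mem_setOf_eq, Set.mem_setOf_eq, hYb]; simp
    rw [h]
    have := heval (fun a b c => !a && cond a c b); simpa using this
  have eXY4 : pr P {ω | X ω = true ∧ Y ω = false} =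
      A true true false + A true false false := by
    have h : {ω | X ω = true ∧ Y ω = false} =
        {ω | (X ω && !(cond (X ω) (Y1 ω) (Y0 ω))) = true} := by
      ext ω; rw [Set.mem_setOf_eq, Set.mem_setOf_eq, hYb]; simp
    rw [h]
    have := heval (fun a b c => a && !(cond a c b)); simpa using this
  have hnonneg : ∀ a b c, 0 ≤ A a b c := by
    intro a b c; exact ENNReal.toReal_nonneg
  have htotal : A true true true + A true true false + A true false true + A true false false
      + A false true true + A false true false + A false false true + A false false false = 1 := by
    have := heval (fun _ _ _ => true)
    have hu : pr P {ω : Ω | (true : Bool) = true} = 1 := by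
      have h : {ω : Ω | (true : Bool) = true} = Set.univ := by ext ω; simp
      rw [h]; simp [pr]
    rw [hu] at this
    simp only [if_true] at this
    linarith
  have n000 := hnonneg true true true
  have n001 := hnonneg true true false
  have n010 := hnonneg true false true
  have n011 := hnonneg true false false
  have n100 := hnonneg false true true
  have n101 := hnonneg false true false
  have n110 := hnonneg false false true
  have n111 := hnonneg false false false
  rw [e1, e0, e0f, eY, ep, eXY, eXY2, eXY3, eXY4]
  constructor
  · apply max_le <;> apply max_le <;> linarith
  · apply le_min <;> [apply le_min; apply le_min] <;> linarith
end

section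
/- Li–Pearl benefit-function bounds, positive-σ case: in the potential-outcome model with benefit vector (β, γ, θ, δ), set σ = β − γ − θ + δ, W = (γ−δ)·P(Y1=1) + δ·P(Y0=1) + θ·P(Y0=0), L = max{0, P(Y1=1)−P(Y0=1), P(Y=1)−P(Y0=1), P(Y1=1)−P(Y=1)}, and U = min{P(Y1=1), P(Y0=0), P(X=1,Y=1)+P(X=0,Y=0), P(Y1=1)−P(Y0=1)+P(X=0,Y=1)+P(X=1,Y=0)}. If σ > 0, then W + σ·L ≤ f ≤ W + σ·U. -/
open MeasureTheory

lemma pr_fiber_sum {Ω : Type*} [MeasurableSpace Ω] (P : Measure Ω) [IsProbabilityMeasure P]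
    (Z : Ω → Bool × Bool × Bool) (hZ : Measurable Z) (q : Bool × Bool × Bool → Prop)
    [DecidablePred q] :
    pr P {ω | q (Z ω)} = ∑ x ∈ Finset.univ.filter q, pr P (Z ⁻¹' {x}) := by
  have hset : {ω | q (Z ω)} = ⋃ x ∈ Finset.univ.filter q, Z ⁻¹' {x} := by
    ext ω; simp
  rw [hset]
  unfold pr
  rw [measure_biUnion_finset]
  · exact ENNReal.toReal_sum fun x _ => measure_ne_top P _
  · intro x _ y _ hxy
    refine Set.disjoint_left.mpr fun ω hx hy => hxy ?_
    simp only [Set.mem_preimage, Set.mem_singleton_iff] at hx hy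
    rw [← hx, hy]
  · intro x _; exact hZ (measurableSet_singleton x)

theorem li_pearl_benefit_bounds_pos {Ω : Type*} [MeasurableSpace Ω] (P : Measure Ω) [IsProbabilityMeasure P]
    (X Y0 Y1 : Ω → Bool) (hX : Measurable X) (hY0 : Measurable Y0) (hY1 : Measurable Y1)
    (Y : Ω → Bool) (hY : ∀ ω, Y ω = if X ω = true then Y1 ω else Y0 ω)
    (β γ θ δ : ℝ) (hσ : β - γ - θ + δ > 0) :
    ((γ - δ) * (pr P {ω | Y1 ω = true}) + δ * (pr P {ω | Y0 ω = true}) + θ * (pr P {ω | Y0 ω = false})) + (β - γ - θ + δ) * (max (max 0 ((pr P {ω | Y1 ω = true}) - (pr P {ω | Y0 ω = true}))) (max ((pr P {ω | Y ω = true}) - (pr P {ω | Y0 ω = true})) ((pr P {ω | Y1 ω = true}) - (pr P {ω | Y ω = true})))) ≤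
      β * (pr P {ω | Y1 ω = true ∧ Y0 ω = false}) + γ * (pr P {ω | Y1 ω = true ∧ Y0 ω = true}) + θ * (pr P {ω | Y1 ω = false ∧ Y0 ω = false}) + δ * (pr P {ω | Y1 ω = false ∧ Y0 ω = true}) ∧
    β * (pr P {ω | Y1 ω = true ∧ Y0 ω = false}) + γ * (pr P {ω | Y1 ω = true ∧ Y0 ω = true}) + θ * (pr P {ω | Y1 ω = false ∧ Y0 ω = false}) + δ * (pr P {ω | Y1 ω = false ∧ Y0 ω = true}) ≤
      ((γ - δ) * (pr P {ω | Y1 ω = true}) + δ * (pr P {ω | Y0 ω = true}) + θ * (pr P {ω | Y0 ω = false})) + (β - γ - θ + δ) * (min (min (pr P {ω | Y1 ω = true}) (pr P {ω | Y0 ω = false})) (min ((pr P {ω | X ω = true ∧ Y ω = true}) + (pr P {ω | X ω = false ∧ Y ω = false})) ((pr P {ω | Y1 ω = true}) - (pr P {ω | Y0 ω = true}) + (pr P {ω | X ω = false ∧ Y ω = true}) + (pr P {ω | X ω = true ∧ Y ω = false})))) := by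
  classical
  set Z : Ω → Bool × Bool × Bool := fun ω => (X ω, Y1 ω, Y0 ω) with hZdef
  have hZ : Measurable Z := hX.prodMk (hY1.prodMk hY0)
  set m : Bool → Bool → Bool → ℝ := fun a b c => pr P (Z ⁻¹' {(a, b, c)}) with hm
  have key : ∀ (q : Bool × Bool × Bool → Prop) [DecidablePred q],
      pr P {ω | q (Z ω)} = ∑ x ∈ Finset.univ.filter q, pr P (Z ⁻¹' {x}) :=
    fun q _ => pr_fiber_sum P Z hZ q
  have hnn : ∀ a b c, 0 ≤ m a b c := fun a b c => ENNReal.toReal_nonneg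
  have h1 : pr P {ω | Y1 ω = true}
      = m true true true + m true true false + m false true true + m false true false := by
    have hs : {ω | Y1 ω = true}
        = {ω | (fun x : Bool × Bool × Bool => x.2.1 = true) (Z ω)} := by
      ext ω; simp [hZdef]
    rw [hs]
    have := key (fun x : Bool × Bool × Bool => x.2.1 = true)
    simp only [Finset.sum_filter, Fintype.sum_prod_type, Fintype.sum_bool] at this
    simp only [hm]; simp at this ⊢; linarith [this]
  have h2 : pr P {ω | Y0 ω = true}
      = m true true true + m true false true + m false true true + m false false true := by
    have hs : {ω | Y0 ω = true}
        = {ω | (fun x : Bool × Bool × Bool => x.2.2 = true) (Z ω)} := by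
      ext ω; simp [hZdef]
    rw [hs]
    have := key (fun x : Bool × Bool × Bool => x.2.2 = true)
    simp only [Finset.sum_filter, Fintype.sum_prod_type, Fintype.sum_bool] at this
    simp only [hm]; simp at this ⊢; linarith [this]
  have h3 : pr P {ω | Y0 ω = false}
      = m true true false + m true false false + m false true false + m false false false := by
    have hs : {ω | Y0 ω = false}
        = {ω | (fun x : Bool × Bool × Bool => x.2.2 = false) (Z ω)} := by
      ext ω; simp [hZdef]
    rw [hs]
    have := key (fun x : Bool × Bool × Bool => x.2.2 = false)
    simp only [Finset.sum_filter, Fintype.sum_prod_type, Fintype.sum_bool] at this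
    simp only [hm]; simp at this ⊢; linarith [this]
  have h4 : pr P {ω | Y ω = true}
      = m true true true + m true true false + m false true true + m false false true := by
    have hs : {ω | Y ω = true}
        = {ω | (fun x : Bool × Bool × Bool => (if x.1 = true then x.2.1 else x.2.2) = true) (Z ω)} := by
      ext ω; simp [hY ω, hZdef]
    rw [hs]
    have := key (fun x : Bool × Bool × Bool => (if x.1 = true then x.2.1 else x.2.2) = true)
    simp only [Finset.sum_filter, Fintype.sum_prod_type, Fintype.sum_bool] at this
    simp only [hm]; simp at this ⊢; linarith [this]
  have h5 : pr P {ω | Y1 ω = true ∧ Y0 ω = false}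
      = m true true false + m false true false := by
    have hs : {ω | Y1 ω = true ∧ Y0 ω = false}
        = {ω | (fun x : Bool × Bool × Bool => x.2.1 = true ∧ x.2.2 = false) (Z ω)} := by
      ext ω; simp [hZdef]
    rw [hs]
    have := key (fun x : Bool × Bool × Bool => x.2.1 = true ∧ x.2.2 = false)
    simp only [Finset.sum_filter, Fintype.sum_prod_type, Fintype.sum_bool] at this
    simp only [hm]; simp at this ⊢; linarith [this]
  have h6 : pr P {ω | Y1 ω = true ∧ Y0 ω = true}
      = m true true true + m false true true := by
    have hs : {ω | Y1 ω = true ∧ Y0 ω = true}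
        = {ω | (fun x : Bool × Bool × Bool => x.2.1 = true ∧ x.2.2 = true) (Z ω)} := by
      ext ω; simp [hZdef]
    rw [hs]
    have := key (fun x : Bool × Bool × Bool => x.2.1 = true ∧ x.2.2 = true)
    simp only [Finset.sum_filter, Fintype.sum_prod_type, Fintype.sum_bool] at this
    simp only [hm]; simp at this ⊢; linarith [this]
  have h7 : pr P {ω | Y1 ω = false ∧ Y0 ω = false}
      = m true false false + m false false false := by
    have hs : {ω | Y1 ω = false ∧ Y0 ω = false}
        = {ω | (fun x : Bool × Bool × Bool => x.2.1 = false ∧ x.2.2 = false) (Z ω)} := by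
      ext ω; simp [hZdef]
    rw [hs]
    have := key (fun x : Bool × Bool × Bool => x.2.1 = false ∧ x.2.2 = false)
    simp only [Finset.sum_filter, Fintype.sum_prod_type, Fintype.sum_bool] at this
    simp only [hm]; simp at this ⊢; linarith [this]
  have h8 : pr P {ω | Y1 ω = false ∧ Y0 ω = true}
      = m true false true + m false false true := by
    have hs : {ω | Y1 ω = false ∧ Y0 ω = true}
        = {ω | (fun x : Bool × Bool × Bool => x.2.1 = false ∧ x.2.2 = true) (Z ω)} := by
      ext ω; simp [hZdef]
    rw [hs]
    have := key (fun x : Bool × Bool × Bool => x.2.1 = false ∧ x.2.2 = true)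
    simp only [Finset.sum_filter, Fintype.sum_prod_type, Fintype.sum_bool] at this
    simp only [hm]; simp at this ⊢; linarith [this]
  have h9 : pr P {ω | X ω = true ∧ Y ω = true}
      = m true true true + m true true false := by
    have hs : {ω | X ω = true ∧ Y ω = true}
        = {ω | (fun x : Bool × Bool × Bool => x.1 = true ∧ (if x.1 = true then x.2.1 else x.2.2) = true) (Z ω)} := by
      ext ω; simp [hY ω, hZdef]
    rw [hs]
    have := key (fun x : Bool × Bool × Bool => x.1 = true ∧ (if x.1 = true then x.2.1 else x.2.2) = true)
    simp only [Finset.sum_filter, Fintype.sum_prod_type, Fintype.sum_bool] at this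
    simp only [hm]; simp at this ⊢; linarith [this]
  have h10 : pr P {ω | X ω = false ∧ Y ω = false}
      = m false true false + m false false false := by
    have hs : {ω | X ω = false ∧ Y ω = false}
        = {ω | (fun x : Bool × Bool × Bool => x.1 = false ∧ (if x.1 = true then x.2.1 else x.2.2) = false) (Z ω)} := by
      ext ω; simp [hY ω, hZdef]
    rw [hs]
    have := key (fun x : Bool × Bool × Bool => x.1 = false ∧ (if x.1 = true then x.2.1 else x.2.2) = false)
    simp only [Finset.sum_filter, Fintype.sum_prod_type, Fintype.sum_bool] at this
    simp only [hm]; simp at this ⊢; linarith [this]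
  have h11 : pr P {ω | X ω = false ∧ Y ω = true}
      = m false true true + m false false true := by
    have hs : {ω | X ω = false ∧ Y ω = true}
        = {ω | (fun x : Bool × Bool × Bool => x.1 = false ∧ (if x.1 = true then x.2.1 else x.2.2) = true) (Z ω)} := by
      ext ω; simp [hY ω, hZdef]
    rw [hs]
    have := key (fun x : Bool × Bool × Bool => x.1 = false ∧ (if x.1 = true then x.2.1 else x.2.2) = true)
    simp only [Finset.sum_filter, Fintype.sum_prod_type, Fintype.sum_bool] at this
    simp only [hm]; simp at this ⊢; linarith [this]
  have h12 : pr P {ω | X ω = true ∧ Y ω = false}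
      = m true false true + m true false false := by
    have hs : {ω | X ω = true ∧ Y ω = false}
        = {ω | (fun x : Bool × Bool × Bool => x.1 = true ∧ (if x.1 = true then x.2.1 else x.2.2) = false) (Z ω)} := by
      ext ω; simp [hY ω, hZdef]
    rw [hs]
    have := key (fun x : Bool × Bool × Bool => x.1 = true ∧ (if x.1 = true then x.2.1 else x.2.2) = false)
    simp only [Finset.sum_filter, Fintype.sum_prod_type, Fintype.sum_bool] at this
    simp only [hm]; simp at this ⊢; linarith [this]
  rw [h1, h2, h3, h4, h5, h6, h7, h8, h9, h10, h11, h12]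
  have n1 := hnn true true true
  have n2 := hnn true true false
  have n3 := hnn true false true
  have n4 := hnn true false false
  have n5 := hnn false true true
  have n6 := hnn false true false
  have n7 := hnn false false true
  have n8 := hnn false false false
  set p : ℝ := m true true false + m false true false with hp
  constructor
  · have hmax : max (max 0 ((m true true true + m true true false + m false true true + m false true false) - (m true true true + m true false true + m false true true + m false false true))) (max ((m true true true + m true true false + m false true true + m false false true) - (m true true true + m true false true + m false true true + m false false true)) ((m true true true + m true true false + m false true true + m false true false) - (m true true true + m true true false + m false true true + m false false true))) ≤ p := by
      apply max_le (max_le (by linarith) (by linarith)) (max_le (by linarith) (by linarith))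
    have hb := mul_le_mul_of_nonneg_left hmax hσ.le
    have hid : β * p + γ * (m true true true + m false true true) + θ * (m true false false + m false false false) + δ * (m true false true + m false false true) = ((γ - δ) * (m true true true + m true true false + m false true true + m false true false) + δ * (m true true true + m true false true + m false true true + m false false true) + θ * (m true true false + m true false false + m false true false + m false false false)) + (β - γ - θ + δ) * p := by
      rw [hp]; ring
    linarith [hb, hid]
  · have hmin : p ≤ min (min (m true true true + m true true false + m false true true + m false true false) (m true true false + m true false false + m false true false + m false false false)) (min ((m true true true + m true true false) + (m false true false + m false false false)) ((m true true true + m true true false + m false true true + m false true false) - (m true true true + m true false true + m false true true + m false false true) + (m false true true + m false false true) + (m true false true + m true false false))) := by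
      apply le_min (le_min (by linarith) (by linarith)) (le_min (by linarith) (by linarith))
    have hb := mul_le_mul_of_nonneg_left hmin hσ.le
    have hid : β * p + γ * (m true true true + m false true true) + θ * (m true false false + m false false false) + δ * (m true false true + m false false true) = ((γ - δ) * (m true true true + m true true false + m false true true + m false true false) + δ * (m true true true + m true false true + m false true true + m false false true) + θ * (m true true false + m true false false + m false true false + m false false false)) + (β - γ - θ + δ) * p := by
      rw [hp]; ring
    linarith [hb, hid]
end

section
/- Uniform (sign-independent) form of the Li–Pearl bounds: in the potential-outcome model with benefit vector (β, γ, θ, δ), set σ = β − γ − θ + δ, W = (γ−δ)·P(Y1=1) + δ·P(Y0=1) + θ·P(Y0=0), L = max{0, P(Y1=1)−P(Y0=1), P(Y=1)−P(Y0=1), P(Y1=1)−P(Y=1)}, and U = min{P(Y1=1), P(Y0=0), P(X=1,Y=1)+P(X=0,Y=0), P(Y1=1)−P(Y0=1)+P(X=0,Y=1)+P(X=1,Y=0)}. Then min{W + σ·L, W + σ·U} ≤ f ≤ max{W + σ·L, W + σ·U}. -/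
open MeasureTheory

lemma li_pearl_aux (q1 q2 q3 q4 q5 q6 q7 q8 β γ θ δ : ℝ)
    (h1 : 0 ≤ q1) (h2 : 0 ≤ q2) (h3 : 0 ≤ q3) (h4 : 0 ≤ q4)
    (h5 : 0 ≤ q5) (h6 : 0 ≤ q6) (h7 : 0 ≤ q7) (h8 : 0 ≤ q8) :
    min (((γ - δ) * (q1 + q2 + q5 + q6) + δ * (q1 + q3 + q5 + q7) + θ * (q2 + q4 + q6 + q8)) + (β - γ - θ + δ) * (max (max 0 ((q1 + q2 + q5 + q6) - (q1 + q3 + q5 + q7))) (max ((q1 + q2 + q5 + q7) - (q1 + q3 + q5 + q7)) ((q1 + q2 + q5 + q6) - (q1 + q2 + q5 + q7))))) (((γ - δ) * (q1 + q2 + q5 + q6) + δ * (q1 + q3 + q5 + q7) + θ * (q2 + q4 + q6 + q8)) + (β - γ - θ + δ) * (min (min (q1 + q2 + q5 + q6) (q2 + q4 + q6 + q8)) (min ((q1 + q2) + (q6 + q8)) ((q1 + q2 + q5 + q6) - (q1 + q3 + q5 + q7) + (q5 + q7) + (q3 + q4))))) ≤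
      β * (q2 + q6) + γ * (q1 + q5) + θ * (q4 + q8) + δ * (q3 + q7) ∧
    β * (q2 + q6) + γ * (q1 + q5) + θ * (q4 + q8) + δ * (q3 + q7) ≤
      max (((γ - δ) * (q1 + q2 + q5 + q6) + δ * (q1 + q3 + q5 + q7) + θ * (q2 + q4 + q6 + q8)) + (β - γ - θ + δ) * (max (max 0 ((q1 + q2 + q5 + q6) - (q1 + q3 + q5 + q7))) (max ((q1 + q2 + q5 + q7) - (q1 + q3 + q5 + q7)) ((q1 + q2 + q5 + q6) - (q1 + q2 + q5 + q7))))) (((γ - δ) * (q1 + q2 + q5 + q6) + δ * (q1 + q3 + q5 + q7) + θ * (q2 + q4 + q6 + q8)) + (β - γ - θ + δ) * (min (min (q1 + q2 + q5 + q6) (q2 + q4 + q6 + q8)) (min ((q1 + q2) + (q6 + q8)) ((q1 + q2 + q5 + q6) - (q1 + q3 + q5 + q7) + (q5 + q7) + (q3 + q4))))) := by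
  have hL : max (max 0 ((q1 + q2 + q5 + q6) - (q1 + q3 + q5 + q7))) (max ((q1 + q2 + q5 + q7) - (q1 + q3 + q5 + q7)) ((q1 + q2 + q5 + q6) - (q1 + q2 + q5 + q7))) ≤ q2 + q6 := by
    apply max_le (max_le (by linarith) (by linarith)) (max_le (by linarith) (by linarith))
  have hU : q2 + q6 ≤ min (min (q1 + q2 + q5 + q6) (q2 + q4 + q6 + q8)) (min ((q1 + q2) + (q6 + q8)) ((q1 + q2 + q5 + q6) - (q1 + q3 + q5 + q7) + (q5 + q7) + (q3 + q4))) := by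
    apply le_min (le_min (by linarith) (by linarith)) (le_min (by linarith) (by linarith))
  rcases le_total 0 (β - γ - θ + δ) with hσ | hσ
  · refine ⟨min_le_of_left_le ?_, le_max_of_le_right ?_⟩
    · nlinarith [mul_le_mul_of_nonneg_left hL hσ]
    · nlinarith [mul_le_mul_of_nonneg_left hU hσ]
  · refine ⟨min_le_of_right_le ?_, le_max_of_le_left ?_⟩
    · nlinarith [mul_le_mul_of_nonpos_left hU hσ]
    · nlinarith [mul_le_mul_of_nonpos_left hL hσ]

theorem li_pearl_benefit_bounds_uniform {Ω : Type*} [MeasurableSpace Ω] (P : Measure Ω) [IsProbabilityMeasure P]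
    (X Y0 Y1 : Ω → Bool) (hX : Measurable X) (hY0 : Measurable Y0) (hY1 : Measurable Y1)
    (Y : Ω → Bool) (hY : ∀ ω, Y ω = if X ω = true then Y1 ω else Y0 ω)
    (β γ θ δ : ℝ) :
    min (((γ - δ) * (pr P {ω | Y1 ω = true}) + δ * (pr P {ω | Y0 ω = true}) + θ * (pr P {ω | Y0 ω = false})) + (β - γ - θ + δ) * (max (max 0 ((pr P {ω | Y1 ω = true}) - (pr P {ω | Y0 ω = true}))) (max ((pr P {ω | Y ω = true}) - (pr P {ω | Y0 ω = true})) ((pr P {ω | Y1 ω = true}) - (pr P {ω | Y ω = true}))))) (((γ - δ) * (pr P {ω | Y1 ω = true}) + δ * (pr P {ω | Y0 ω = true}) + θ * (pr P {ω | Y0 ω = false})) + (β - γ - θ + δ) * (min (min (pr P {ω | Y1 ω = true}) (pr P {ω | Y0 ω = false})) (min ((pr P {ω | X ω = true ∧ Y ω = true}) + (pr P {ω | X ω = false ∧ Y ω = false})) ((pr P {ω | Y1 ω = true}) - (pr P {ω | Y0 ω = true}) + (pr P {ω | X ω = false ∧ Y ω = true}) + (pr P {ω | X ω = true ∧ Y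 ω = false}))))) ≤
      β * (pr P {ω | Y1 ω = true ∧ Y0 ω = false}) + γ * (pr P {ω | Y1 ω = true ∧ Y0 ω = true}) + θ * (pr P {ω | Y1 ω = false ∧ Y0 ω = false}) + δ * (pr P {ω | Y1 ω = false ∧ Y0 ω = true}) ∧
    β * (pr P {ω | Y1 ω = true ∧ Y0 ω = false}) + γ * (pr P {ω | Y1 ω = true ∧ Y0 ω = true}) + θ * (pr P {ω | Y1 ω = false ∧ Y0 ω = false}) + δ * (pr P {ω | Y1 ω = false ∧ Y0 ω = true}) ≤
      max (((γ - δ) * (pr P {ω | Y1 ω = true}) + δ * (pr P {ω | Y0 ω = true}) + θ * (pr P {ω | Y0 ω = false})) + (β - γ - θ + δ) * (max (max 0 ((pr P {ω | Y1 ω = true}) - (pr P {ω | Y0 ω = true}))) (max ((pr P {ω | Y ω = true}) - (pr P {ω | Y0 ω = true})) ((pr P {ω | Y1 ω = true}) - (pr P {ω | Y ω = true}))))) (((γ - δ) * (pr P {ω | Y1 ω = true}) + δ * (pr P {ω | Y0 ω = true}) + θ * (pr P {ω | Y0 ω = false})) + (β - γ - θ + δ) * (min (min (pr P {ω | Y1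 ω = true}) (pr P {ω | Y0 ω = false})) (min ((pr P {ω | X ω = true ∧ Y ω = true}) + (pr P {ω | X ω = false ∧ Y ω = false})) ((pr P {ω | Y1 ω = true}) - (pr P {ω | Y0 ω = true}) + (pr P {ω | X ω = false ∧ Y ω = true}) + (pr P {ω | X ω = true ∧ Y ω = false}))))) := by
  classical
  set e : Bool → Bool → Bool → ℝ := fun x y z => pr P {ω | (X ω, Y1 ω, Y0 ω) = (x, y, z)} with he
  have hpos : ∀ x y z, 0 ≤ e x y z := fun _ _ _ => ENNReal.toReal_nonneg
  have key : ∀ (Q : Bool × Bool × Bool → Prop) (_ : DecidablePred Q),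
      pr P {ω | Q (X ω, Y1 ω, Y0 ω)} = ∑ p ∈ Finset.univ.filter Q, e p.1 p.2.1 p.2.2 := by
    intro Q _
    have hgm : Measurable fun ω => (X ω, Y1 ω, Y0 ω) := hX.prodMk (hY1.prodMk hY0)
    have hset : {ω | Q (X ω, Y1 ω, Y0 ω)} =
        ⋃ p ∈ Finset.univ.filter Q, {ω | (X ω, Y1 ω, Y0 ω) = p} := by
      ext ω; simp
    rw [hset]
    unfold pr
    rw [measure_biUnion_finset]
    · rw [ENNReal.toReal_sum (fun p _ => measure_ne_top P _)]
      refine Finset.sum_congr rfl fun p _ => ?_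
      simp [he, pr, Prod.ext_iff]
    · intro p _ q _ hpq
      refine Set.disjoint_left.2 fun ω h1 h2 => hpq ?_
      simp only [Set.mem_setOf_eq] at h1 h2
      rw [← h1, h2]
    · intro p _
      exact hgm (measurableSet_singleton p)
  have hYt : {ω | Y ω = true} = {ω | if X ω = true then Y1 ω = true else Y0 ω = true} := by
    ext ω; rw [Set.mem_setOf_eq, Set.mem_setOf_eq, hY ω]
    by_cases hx : X ω = true <;> simp [hx]
  have hXtYt : {ω | X ω = true ∧ Y ω = true} =
      {ω | X ω = true ∧ if X ω = true then Y1 ω = true else Y0 ω = true} := by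
    ext ω; rw [Set.mem_setOf_eq, Set.mem_setOf_eq, hY ω]
    by_cases hx : X ω = true <;> simp [hx]
  have hXfYf : {ω | X ω = false ∧ Y ω = false} =
      {ω | X ω = false ∧ if X ω = true then Y1 ω = false else Y0 ω = false} := by
    ext ω; rw [Set.mem_setOf_eq, Set.mem_setOf_eq, hY ω]
    by_cases hx : X ω = true <;> simp [hx]
  have hXfYt : {ω | X ω = false ∧ Y ω = true} =
      {ω | X ω = false ∧ if X ω = true then Y1 ω = true else Y0 ω = true} := by
    ext ω; rw [Set.mem_setOf_eq, Set.mem_setOf_eq, hY ω]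
    by_cases hx : X ω = true <;> simp [hx]
  have hXtYf : {ω | X ω = true ∧ Y ω = false} =
      {ω | X ω = true ∧ if X ω = true then Y1 ω = false else Y0 ω = false} := by
    ext ω; rw [Set.mem_setOf_eq, Set.mem_setOf_eq, hY ω]
    by_cases hx : X ω = true <;> simp [hx]
  have e1 : pr P {ω | Y1 ω = true} =
      e true true true + e true true false + e false true true + e false true false := by
    have h := key (fun p => p.2.1 = true) inferInstance
    norm_num [Finset.sum_filter, Fintype.sum_prod_type] at h
    linarith [h]
  have e2 : pr P {ω | Y0 ω = true} =
      e true true true + e true false true + e false true true + e false false true := by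
    have h := key (fun p => p.2.2 = true) inferInstance
    norm_num [Finset.sum_filter, Fintype.sum_prod_type] at h
    linarith [h]
  have e3 : pr P {ω | Y0 ω = false} =
      e true true false + e true false false + e false true false + e false false false := by
    have h := key (fun p => p.2.2 = false) inferInstance
    norm_num [Finset.sum_filter, Fintype.sum_prod_type] at h
    linarith [h]
  have e4 : pr P {ω | Y ω = true} =
      e true true true + e true true false + e false true true + e false false true := by
    rw [hYt]
    have h := key (fun p => (if p.1 = true then p.2.1 else p.2.2) = true) inferInstance
    norm_num [Finset.sum_filter, Fintype.sum_prod_type] at h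
    linarith [h]
  have e5 : pr P {ω | X ω = true ∧ Y ω = true} = e true true true + e true true false := by
    rw [hXtYt]
    have h := key (fun p => p.1 = true ∧ (if p.1 = true then p.2.1 else p.2.2) = true)
      inferInstance
    norm_num [Finset.sum_filter, Fintype.sum_prod_type] at h
    linarith [h]
  have e6 : pr P {ω | X ω = false ∧ Y ω = false} = e false true false + e false false false := by
    rw [hXfYf]
    have h := key (fun p => p.1 = false ∧ (if p.1 = true then p.2.1 else p.2.2) = false)
      inferInstance
    norm_num [Finset.sum_filter, Fintype.sum_prod_type] at h
    linarith [h]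
  have e7 : pr P {ω | X ω = false ∧ Y ω = true} = e false true true + e false false true := by
    rw [hXfYt]
    have h := key (fun p => p.1 = false ∧ (if p.1 = true then p.2.1 else p.2.2) = true)
      inferInstance
    norm_num [Finset.sum_filter, Fintype.sum_prod_type] at h
    linarith [h]
  have e8 : pr P {ω | X ω = true ∧ Y ω = false} = e true false true + e true false false := by
    rw [hXtYf]
    have h := key (fun p => p.1 = true ∧ (if p.1 = true then p.2.1 else p.2.2) = false)
      inferInstance
    norm_num [Finset.sum_filter, Fintype.sum_prod_type] at h
    linarith [h]
  have e9 : pr P {ω | Y1 ω = true ∧ Y0 ω = false} = e true true false + e false true false := by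
    have h := key (fun p => p.2.1 = true ∧ p.2.2 = false) inferInstance
    norm_num [Finset.sum_filter, Fintype.sum_prod_type] at h
    linarith [h]
  have e10 : pr P {ω | Y1 ω = true ∧ Y0 ω = true} = e true true true + e false true true := by
    have h := key (fun p => p.2.1 = true ∧ p.2.2 = true) inferInstance
    norm_num [Finset.sum_filter, Fintype.sum_prod_type] at h
    linarith [h]
  have e11 : pr P {ω | Y1 ω = false ∧ Y0 ω = false} =
      e true false false + e false false false := by
    have h := key (fun p => p.2.1 = false ∧ p.2.2 = false) inferInstance
    norm_num [Finset.sum_filter, Fintype.sum_prod_type] at h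
    linarith [h]
  have e12 : pr P {ω | Y1 ω = false ∧ Y0 ω = true} = e true false true + e false false true := by
    have h := key (fun p => p.2.1 = false ∧ p.2.2 = true) inferInstance
    norm_num [Finset.sum_filter, Fintype.sum_prod_type] at h
    linarith [h]
  rw [e1, e2, e3, e4, e5, e6, e7, e8, e9, e10, e11, e12]
  exact li_pearl_aux (e true true true) (e true true false) (e true false true)
    (e true false false) (e false true true) (e false true false) (e false false true)
    (e false false false) β γ θ δ (hpos _ _ _) (hpos _ _ _) (hpos _ _ _) (hpos _ _ _)
    (hpos _ _ _) (hpos _ _ _) (hpos _ _ _) (hpos _ _ _)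
end

section
/- Tightness of the Tian–Pearl PNS bounds: let q11, q10, q01, q00 be nonnegative reals summing to 1 (the prospective observational probabilities P(X=1,Y=1), P(X=1,Y=0), P(X=0,Y=1), P(X=0,Y=0)), and let a, b ∈ [0,1] (the prospective experimental probabilities P(Y1=1), P(Y0=1)) satisfy q11 ≤ a ≤ 1 − q10 and q01 ≤ b ≤ 1 − q00. Set L = max{0, a − b, (q11 + q01) − b, a − (q11 + q01)} and U = min{a, 1 − b, q11 + q00, a − b + q01 + q10}. Then for every v with L ≤ v ≤ U there exists a probability space with measurable random variables X, Y0, Y1 : Ω → {0,1} such that, with Y(ω) = Y1(ω) if X(ω)=1 and Y0(ω) otherwise: P(Y1=1) = a, P(Y0=1) = b, P(X=1,Y=1) = q11, P(X=1,Y=0) = q10, P(X=0,Y=1) = q01, P(X=0,Y=0) = q00, and P(Y1=1, Y0=0) = v. -/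
open MeasureTheory

lemma pr_weighted (f : Bool × Bool × Bool → ℝ) (hf : ∀ ω, 0 ≤ f ω)
    (S : Set (Bool × Bool × Bool)) [DecidablePred (· ∈ S)] :
    pr (∑ ω : Bool × Bool × Bool, ENNReal.ofReal (f ω) • Measure.dirac ω) S
      = ∑ ω : Bool × Bool × Bool, if ω ∈ S then f ω else 0 := by
  unfold pr
  rw [ Measure.coe_finset_sum, Finset.sum_apply]
  rw [ENNReal.toReal_sum]
  · refine Finset.sum_congr rfl fun ω _ => ?_
    rw [Measure.smul_apply, Measure.dirac_apply' _ MeasurableSet.of_discrete,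
      Set.indicator_apply]
    by_cases h : ω ∈ S <;> simp [h, ENNReal.toReal_ofReal (hf ω)]
  · intro ω _
    rw [Measure.smul_apply, Measure.dirac_apply' _ MeasurableSet.of_discrete,
      Set.indicator_apply]
    by_cases h : ω ∈ S <;> simp [h]

theorem tian_pearl_pns_bounds_tight
    (q11 q10 q01 q00 a b : ℝ)
    (hq11 : 0 ≤ q11) (hq10 : 0 ≤ q10) (hq01 : 0 ≤ q01) (hq00 : 0 ≤ q00)
    (hsum : q11 + q10 + q01 + q00 = 1)
    (ha0 : 0 ≤ a) (ha1 : a ≤ 1) (hb0 : 0 ≤ b) (hb1 : b ≤ 1)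
    (haq : q11 ≤ a) (haq' : a ≤ 1 - q10)
    (hbq : q01 ≤ b) (hbq' : b ≤ 1 - q00)
    (v : ℝ)
    (hvL : max (max 0 (a - b)) (max ((q11 + q01) - b) (a - (q11 + q01))) ≤ v)
    (hvU : v ≤ min (min a (1 - b)) (min (q11 + q00) (a - b + q01 + q10))) :
    ∃ (Ω : Type) (_ : MeasurableSpace Ω) (P : Measure Ω),
      IsProbabilityMeasure P ∧
      ∃ X Y0 Y1 : Ω → Bool, Measurable X ∧ Measurable Y0 ∧ Measurable Y1 ∧
        (let Y : Ω → Bool := fun ω => if X ω = true then Y1 ω else Y0 ω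
        (pr P {ω | Y1 ω = true}) = a ∧ (pr P {ω | Y0 ω = true}) = b ∧
        (pr P {ω | X ω = true ∧ Y ω = true}) = q11 ∧ (pr P {ω | X ω = true ∧ Y ω = false}) = q10 ∧
        (pr P {ω | X ω = false ∧ Y ω = true}) = q01 ∧ (pr P {ω | X ω = false ∧ Y ω = false}) = q00 ∧
        (pr P {ω | Y1 ω = true ∧ Y0 ω = false}) = v) := by
  classical
  simp only [max_le_iff] at hvL
  simp only [le_min_iff] at hvU
  obtain ⟨⟨hv0, hvab⟩, hv1, hv2⟩ := hvL
  obtain ⟨⟨hva, hvb⟩, hv3, hv4⟩ := hvU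
  set s : ℝ := max (max 0 (b - q01 - q10)) (max (q11 - v) (a - v - q01)) with hs_def
  have hsl : ∀ x ∈ ({0, b - q01 - q10, q11 - v, a - v - q01} : Set ℝ), x ≤ s := by
    intro x hx
    rcases hx with h | h | h | h <;> subst h
    · exact le_max_of_le_left (le_max_left _ _)
    · exact le_max_of_le_left (le_max_right _ _)
    · exact le_max_of_le_right (le_max_left _ _)
    · exact le_max_of_le_right (le_max_right _ _)
  have hs0 : 0 ≤ s := hsl 0 (by simp)
  have hs0' : b - q01 - q10 ≤ s := hsl _ (by simp)
  have hs0'' : q11 - v ≤ s := hsl _ (by simp)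
  have hs0''' : a - v - q01 ≤ s := hsl _ (by simp)
  have hsu : ∀ u : ℝ, 0 ≤ u → b - q01 - q10 ≤ u → q11 - v ≤ u → a - v - q01 ≤ u → s ≤ u := by
    intro u h1 h2 h3 h4
    exact max_le (max_le h1 h2) (max_le h3 h4)
  have hs1 : s ≤ q11 := hsu _ hq11 (by linarith) (by linarith) (by linarith)
  have hs2 : s ≤ b - q01 := hsu _ (by linarith) (by linarith) (by linarith) (by linarith)
  have hs3 : s ≤ q11 + q00 - v := hsu _ (by linarith) (by linarith) (by linarith) (by linarith)
  have hs4 : s ≤ a - v := hsu _ (by linarith) (by linarith) (by linarith) (by linarith)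
  set f : Bool × Bool × Bool → ℝ := fun ω =>
    match ω with
    | (true, true, true) => s
    | (true, false, true) => q11 - s
    | (true, true, false) => b - q01 - s
    | (true, false, false) => q10 - (b - q01 - s)
    | (false, true, true) => a - v - s
    | (false, true, false) => q01 - (a - v - s)
    | (false, false, true) => v - q11 + s
    | (false, false, false) => q00 - (v - q11 + s) with hf_def
  have hf : ∀ ω, 0 ≤ f ω := by
    rintro ⟨x, y0, y1⟩
    cases x <;> cases y0 <;> cases y1 <;> simp [hf_def] <;> linarith
  refine ⟨Bool × Bool × Bool, inferInstance,
    ∑ ω : Bool × Bool × Bool, ENNReal.ofReal (f ω) • Measure.dirac ω, ?_,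
    Prod.fst, (fun ω => ω.2.1), (fun ω => ω.2.2),
    Measurable.of_discrete, Measurable.of_discrete, Measurable.of_discrete, ?_⟩
  · constructor
    have := pr_weighted f hf Set.univ
    unfold pr at this
    have htot : (∑ ω : Bool × Bool × Bool,
        ENNReal.ofReal (f ω) • Measure.dirac ω) Set.univ = ENNReal.ofReal 1 := by
      rw [Measure.coe_finset_sum, Finset.sum_apply]
      have heach : ∀ ω : Bool × Bool × Bool,
          (ENNReal.ofReal (f ω) • Measure.dirac ω) Set.univ = ENNReal.ofReal (f ω) := by
        intro ω
        rw [Measure.smul_apply, Measure.dirac_apply' _ MeasurableSet.of_discrete]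
        simp
      simp only [heach]
      rw [← ENNReal.ofReal_sum_of_nonneg (fun ω _ => hf ω)]
      congr 1
      simp only [hf_def, Fintype.sum_prod_type, Fintype.sum_bool]
      ring_nf
      linarith
    rw [htot]; simp
  · simp only
    refine ⟨?_, ?_, ?_, ?_, ?_, ?_, ?_⟩ <;>
      rw [pr_weighted f hf _] <;>
      simp [hf_def, Fintype.sum_prod_type, Fintype.sum_bool] <;> ring_nf <;> linarith
end

section
/- Tightness of the Li–Pearl benefit-function bounds: let q11, q10, q01, q00 be nonnegative reals summing to 1, and let a, b ∈ [0,1] satisfy q11 ≤ a ≤ 1 − q10 and q01 ≤ b ≤ 1 − q00. Let β, γ, θ, δ be reals with σ = β − γ − θ + δ, W = (γ−δ)·a + δ·b + θ·(1−b), L = max{0, a − b, (q11 + q01) − b, a − (q11 + q01)}, and U = min{a, 1 − b, q11 + q00, a − b + q01 + q10}. Then for every value v lying between W + σ·L and W + σ·U (inclusive) there exists a probability space with measurable random variables X, Y0, Y1 : Ω → {0,1} such that, with Y(ω) = Y1(ω) if X(ω)=1 and Y0(ω) otherwise: P(Y1=1) = a, P(Y0=1) = b, P(X=1,Y=1) =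 q11, P(X=1,Y=0) = q10, P(X=0,Y=1) = q01, P(X=0,Y=0) = q00, and β·P(Y1=1,Y0=0) + γ·P(Y1=1,Y0=1) + θ·P(Y1=0,Y0=0) + δ·P(Y1=0,Y0=1) = v. -/
open MeasureTheory

lemma construct_measure (w : Bool × Bool × Bool → ℝ) (hw : ∀ p, 0 ≤ w p)
    (hsum : ∑ p : Bool × Bool × Bool, w p = 1) :
    ∃ P : Measure (Bool × Bool × Bool), IsProbabilityMeasure P ∧
      ∀ s : Set (Bool × Bool × Bool),
        pr P s = ∑ p : Bool × Bool × Bool, s.indicator w p := by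
  have hf : ∑ p : Bool × Bool × Bool, ENNReal.ofReal (w p) = 1 := by
    rw [← ENNReal.ofReal_sum_of_nonneg (fun p _ => hw p), hsum, ENNReal.ofReal_one]
  refine ⟨(PMF.ofFintype (fun p => ENNReal.ofReal (w p)) hf).toMeasure, inferInstance, fun s => ?_⟩
  rw [pr, PMF.toMeasure_apply_fintype]
  have : ∀ p : Bool × Bool × Bool,
      s.indicator (⇑(PMF.ofFintype (fun p => ENNReal.ofReal (w p)) hf)) p
        = ENNReal.ofReal (s.indicator w p) := by
    intro p
    classical
    by_cases hp : p ∈ s <;> simp [Set.indicator_apply, hp, PMF.ofFintype_apply]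
  rw [Finset.sum_congr rfl (fun p _ => this p),
    ← ENNReal.ofReal_sum_of_nonneg (fun p _ => Set.indicator_nonneg (fun q _ => hw q) p),
    ENNReal.toReal_ofReal]
  exact Finset.sum_nonneg fun p _ => Set.indicator_nonneg (fun q _ => hw q) p

set_option maxHeartbeats 1000000 in
theorem li_pearl_benefit_bounds_tight
    (q11 q10 q01 q00 a b : ℝ)
    (hq11 : 0 ≤ q11) (hq10 : 0 ≤ q10) (hq01 : 0 ≤ q01) (hq00 : 0 ≤ q00)
    (hsum : q11 + q10 + q01 + q00 = 1)
    (ha0 : 0 ≤ a) (ha1 : a ≤ 1) (hb0 : 0 ≤ b) (hb1 : b ≤ 1)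
    (haq : q11 ≤ a) (haq' : a ≤ 1 - q10)
    (hbq : q01 ≤ b) (hbq' : b ≤ 1 - q00)
    (β γ θ δ : ℝ) (v : ℝ)
    (hvL : min (((γ - δ) * a + δ * b + θ * (1 - b)) + (β - γ - θ + δ) * (max (max 0 (a - b)) (max ((q11 + q01) - b) (a - (q11 + q01)))))
              (((γ - δ) * a + δ * b + θ * (1 - b)) + (β - γ - θ + δ) * (min (min a (1 - b)) (min (q11 + q00) (a - b + q01 + q10)))) ≤ v)
    (hvU : v ≤ max (((γ - δ) * a + δ * b + θ * (1 - b)) + (β - γ - θ + δ) * (max (max 0 (a - b)) (max ((q11 + q01) - b) (a - (q11 + q01)))))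
              (((γ - δ) * a + δ * b + θ * (1 - b)) + (β - γ - θ + δ) * (min (min a (1 - b)) (min (q11 + q00) (a - b + q01 + q10))))) :
    ∃ (Ω : Type) (_ : MeasurableSpace Ω) (P : Measure Ω),
      IsProbabilityMeasure P ∧
      ∃ X Y0 Y1 : Ω → Bool, Measurable X ∧ Measurable Y0 ∧ Measurable Y1 ∧
        (let Y : Ω → Bool := fun ω => if X ω = true then Y1 ω else Y0 ω
        (pr P {ω | Y1 ω = true}) = a ∧ (pr P {ω | Y0 ω = true}) = b ∧
        (pr P {ω | X ω = true ∧ Y ω = true}) = q11 ∧ (pr P {ω | X ω = true ∧ Y ω = false}) = q10 ∧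
        (pr P {ω | X ω = false ∧ Y ω = true}) = q01 ∧ (pr P {ω | X ω = false ∧ Y ω = false}) = q00 ∧
        β * (pr P {ω | Y1 ω = true ∧ Y0 ω = false}) + γ * (pr P {ω | Y1 ω = true ∧ Y0 ω = true}) + θ * (pr P {ω | Y1 ω = false ∧ Y0 ω = false}) + δ * (pr P {ω | Y1 ω = false ∧ Y0 ω = true}) = v) := by
  classical
  set W := (γ - δ) * a + δ * b + θ * (1 - b) with hW
  set S := β - γ - θ + δ with hS
  set L := max (max 0 (a - b)) (max ((q11 + q01) - b) (a - (q11 + q01))) with hLdef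
  set U := min (min a (1 - b)) (min (q11 + q00) (a - b + q01 + q10)) with hUdef
  have hL1 : (0:ℝ) ≤ L := le_trans (le_max_left _ _) (le_max_left _ _)
  have hL2 : a - b ≤ L := le_trans (le_max_right _ _) (le_max_left _ _)
  have hL3 : q11 + q01 - b ≤ L := le_trans (le_max_left _ _) (le_max_right _ _)
  have hL4 : a - (q11 + q01) ≤ L := le_trans (le_max_right _ _) (le_max_right _ _)
  have hU1 : U ≤ a := le_trans (min_le_left _ _) (min_le_left _ _)
  have hU2 : U ≤ 1 - b := le_trans (min_le_left _ _) (min_le_right _ _)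
  have hU3 : U ≤ q11 + q00 := le_trans (min_le_right _ _) (min_le_left _ _)
  have hU4 : U ≤ a - b + q01 + q10 := le_trans (min_le_right _ _) (min_le_right _ _)
  have hLU : L ≤ U := by
    rw [hLdef, hUdef]
    simp only [max_le_iff, le_min_iff]
    refine ⟨⟨⟨⟨?_, ?_⟩, ?_, ?_⟩, ⟨?_, ?_⟩, ?_, ?_⟩, ⟨⟨?_, ?_⟩, ?_, ?_⟩, ⟨?_, ?_⟩, ?_, ?_⟩ <;>
      linarith
  have hST : ∃ t, L ≤ t ∧ t ≤ U ∧ W + S * t = v := by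
    rcases eq_or_ne S 0 with h0 | h0
    · refine ⟨L, le_rfl, hLU, ?_⟩
      rw [h0] at hvL hvU ⊢
      simp only [zero_mul, add_zero, min_self, max_self] at hvL hvU ⊢
      linarith
    · rcases lt_or_gt_of_ne h0 with hneg | hpos
      · have hkey : S * U ≤ S * L := mul_le_mul_of_nonpos_left hLU hneg.le
        have hmin : min (W + S * L) (W + S * U) = W + S * U :=
          min_eq_right (by linarith)
        have hmax : max (W + S * L) (W + S * U) = W + S * L :=
          max_eq_left (by linarith)
        rw [hmin] at hvL; rw [hmax] at hvU
        refine ⟨(v - W) / S, ?_, ?_, ?_⟩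
        · rw [le_div_iff_of_neg hneg]; linarith [mul_comm L S]
        · rw [div_le_iff_of_neg hneg]; linarith [mul_comm U S]
        · rw [mul_div_cancel₀ _ h0]; ring
      · have hkey : S * L ≤ S * U := mul_le_mul_of_nonneg_left hLU hpos.le
        have hmin : min (W + S * L) (W + S * U) = W + S * L :=
          min_eq_left (by linarith)
        have hmax : max (W + S * L) (W + S * U) = W + S * U :=
          max_eq_right (by linarith)
        rw [hmin] at hvL; rw [hmax] at hvU
        refine ⟨(v - W) / S, ?_, ?_, ?_⟩
        · rw [le_div_iff₀ hpos]; linarith [mul_comm L S]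
        · rw [div_le_iff₀ hpos]; linarith [mul_comm U S]
        · rw [mul_div_cancel₀ _ h0]; ring
  obtain ⟨t, hLt, htU, htv⟩ := hST
  have ht0 : (0:ℝ) ≤ t := le_trans hL1 hLt
  have ht1 : a - b ≤ t := le_trans hL2 hLt
  have ht2 : q11 + q01 - b ≤ t := le_trans hL3 hLt
  have ht3 : a - (q11 + q01) ≤ t := le_trans hL4 hLt
  have ht4 : t ≤ a := le_trans htU hU1
  have ht5 : t ≤ 1 - b := le_trans htU hU2
  have ht6 : t ≤ q11 + q00 := le_trans htU hU3
  have ht7 : t ≤ a - b + q01 + q10 := le_trans htU hU4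
  set s := max (max 0 (a - t - q01)) (max (q11 - t) (b - q01 - q10)) with hsdef
  have hs1 : (0:ℝ) ≤ s := le_trans (le_max_left _ _) (le_max_left _ _)
  have hs2 : a - t - q01 ≤ s := le_trans (le_max_right _ _) (le_max_left _ _)
  have hs3 : q11 - t ≤ s := le_trans (le_max_left _ _) (le_max_right _ _)
  have hs4 : b - q01 - q10 ≤ s := le_trans (le_max_right _ _) (le_max_right _ _)
  have hsA : s ≤ a - t :=
    max_le (max_le (by linarith) (by linarith)) (max_le (by linarith) (by linarith))
  have hsB : s ≤ q11 :=
    max_le (max_le (by linarith) (by linarith)) (max_le (by linarith) (by linarith))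
  have hsC : s ≤ b - q01 :=
    max_le (max_le (by linarith) (by linarith)) (max_le (by linarith) (by linarith))
  have hsD : s ≤ q00 + q11 - t :=
    max_le (max_le (by linarith) (by linarith)) (max_le (by linarith) (by linarith))
  set w : Bool × Bool × Bool → ℝ := fun p =>
    if p.1 = true then
      if p.2.1 = true then (if p.2.2 = true then s else q11 - s)
      else (if p.2.2 = true then b - q01 - s else q10 - b + q01 + s)
    else
      if p.2.1 = true then (if p.2.2 = true then a - t - s else t - q11 + s)
      else (if p.2.2 = true then q01 - a + t + s else q00 + q11 - t - s)
    with hwdef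
  have hw : ∀ p, 0 ≤ w p := by
    rintro ⟨x, y1, y0⟩
    cases x <;> cases y1 <;> cases y0 <;> simp only [hwdef] <;> norm_num <;> linarith
  have hwsum : ∑ p : Bool × Bool × Bool, w p = 1 := by
    simp only [hwdef, Fintype.sum_prod_type, Fintype.sum_bool]
    norm_num
    linarith
  obtain ⟨P, hP, hPr⟩ := construct_measure w hw hwsum
  refine ⟨Bool × Bool × Bool, inferInstance, P, hP,
    (fun ω => ω.1), (fun ω => ω.2.2), (fun ω => ω.2.1),
    Measurable.of_discrete, Measurable.of_discrete, Measurable.of_discrete, ?_⟩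
  dsimp only
  refine ⟨?_, ?_, ?_, ?_, ?_, ?_, ?_⟩
  · rw [hPr]
    simp only [Fintype.sum_prod_type, Fintype.sum_bool, Set.indicator_apply,
      Set.mem_setOf_eq, hwdef]
    norm_num
  · rw [hPr]
    simp only [Fintype.sum_prod_type, Fintype.sum_bool, Set.indicator_apply,
      Set.mem_setOf_eq, hwdef]
    norm_num
  · rw [hPr]
    simp only [Fintype.sum_prod_type, Fintype.sum_bool, Set.indicator_apply,
      Set.mem_setOf_eq, hwdef]
    norm_num
  · rw [hPr]
    simp only [Fintype.sum_prod_type, Fintype.sum_bool, Set.indicator_apply,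
      Set.mem_setOf_eq, hwdef]
    norm_num
  · rw [hPr]
    simp only [Fintype.sum_prod_type, Fintype.sum_bool, Set.indicator_apply,
      Set.mem_setOf_eq, hwdef]
    norm_num
  · rw [hPr]
    simp only [Fintype.sum_prod_type, Fintype.sum_bool, Set.indicator_apply,
      Set.mem_setOf_eq, hwdef]
    norm_num
  · rw [hPr, hPr, hPr, hPr]
    simp only [Fintype.sum_prod_type, Fintype.sum_bool, Set.indicator_apply,
      Set.mem_setOf_eq, hwdef]
    norm_num
    rw [← htv, hW, hS]
    linear_combination θ * hsum
end
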